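/- arXiv:2604.18277 — 2 statements merged into one kernel-verified Lean document; each statement's English description precedes it below -/
import Mathlib

section
/- Coverage of the dissipative cone: let g ∈ ℝⁿ with g ≠ 0. Then for every vector r with ⟨g, r⟩ ≤ 0 there exist a skew-symmetric matrix S and a positive semidefinite matrix K such that r = (S - K) g. -/
/-!
With `a = ⟨g, g⟩ > 0` and `c = ⟨g, r⟩ ≤ 0`, take `S = (r gᵀ - g rᵀ) / a` and
`K = (-c / a²) g gᵀ`. Then `S g = r - (c / a) g` and `K g = -(c / a) g`, so `(S - K) g = r`;
`S` is skew-symmetric by construction and `K` is a nonnegative multiple of `g gᵀ`.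
Replacing `r` by `r⊥ = r - (c / a) g` in `S` changes nothing, since the `g gᵀ` terms cancel.
-/

open Matrix

namespace Matrix

variable {ι R : Type*}

theorem transpose_vecMulVec_sub_vecMulVec [CommRing R] (u v : ι → R) :
    (vecMulVec u v - vecMulVec v u)ᵀ = -(vecMulVec u v - vecMulVec v u) := by
  rw [transpose_sub, transpose_vecMulVec, transpose_vecMulVec, neg_sub]

variable [Fintype ι]

theorem vecMulVec_mulVec_of_comm [CommSemiring R] (u v w : ι → R) :
    vecMulVec u v *ᵥ w = (v ⬝ᵥ w) • u := by
  rw [vecMulVec_mulVec, op_smul_eq_smul]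

theorem dotProduct_vecMulVec_self_mulVec [CommSemiring R] (g v : ι → R) :
    v ⬝ᵥ (vecMulVec g g *ᵥ v) = (g ⬝ᵥ v) ^ 2 := by
  rw [vecMulVec_mulVec_of_comm, dotProduct_smul, smul_eq_mul, dotProduct_comm v g, sq]

theorem vecMulVec_sub_vecMulVec_mulVec [CommRing R] (r g : ι → R) :
    (vecMulVec r g - vecMulVec g r) *ᵥ g = (g ⬝ᵥ g) • r - (g ⬝ᵥ r) • g := by
  rw [sub_mulVec, vecMulVec_mulVec_of_comm, vecMulVec_mulVec_of_comm, dotProduct_comm r g]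

end Matrix

theorem coverage_of_dissipative_cone (n : ℕ) (g r : Fin n → ℝ)
    (hg : g ≠ 0) (hr : g ⬝ᵥ r ≤ 0) :
    ∃ S K : Matrix (Fin n) (Fin n) ℝ,
      Sᵀ = -S ∧ Kᵀ = K ∧ (∀ v : Fin n → ℝ, 0 ≤ v ⬝ᵥ (K *ᵥ v)) ∧
      (S - K) *ᵥ g = r := by
  set a := g ⬝ᵥ g
  set c := g ⬝ᵥ r
  have ha : a ≠ 0 := dotProduct_self_eq_zero.not.mpr hg
  have hcoef : 0 ≤ -c / a ^ 2 := div_nonneg (neg_nonneg.mpr hr) (sq_nonneg a)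
  refine ⟨a⁻¹ • (vecMulVec r g - vecMulVec g r), (-c / a ^ 2) • vecMulVec g g, ?_, ?_, ?_, ?_⟩
  · rw [transpose_smul, transpose_vecMulVec_sub_vecMulVec, smul_neg]
  · rw [transpose_smul, transpose_vecMulVec]
  · intro v
    rw [smul_mulVec, dotProduct_smul, dotProduct_vecMulVec_self_mulVec, smul_eq_mul]
    exact mul_nonneg hcoef (sq_nonneg _)
  · rw [sub_mulVec, smul_mulVec, smul_mulVec, vecMulVec_sub_vecMulVec_mulVec,
      vecMulVec_mulVec_of_comm]
    ext i
    simp only [Pi.sub_apply, Pi.smul_apply, smul_eq_mul]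
    field_simp
    ring
end

section
/- The skew-dissipative representable set equals the dissipative cone: for g ≠ 0 in ℝⁿ, { (S - K) g : Sᵀ = -S, K positive semidefinite } = { r : ⟨g, r⟩ ≤ 0 }. -/
open Matrix RealInnerProductSpace

variable {R ι : Type*} [Fintype ι]

section OrderedRing

variable [CommRing R] [LinearOrder R] [IsStrictOrderedRing R]

lemma dotProduct_mulVec_self_eq_zero_of_transpose_eq_neg {S : Matrix ι ι R} (hS : Sᵀ = -S)
    (v : ι → R) : v ⬝ᵥ (S *ᵥ v) = 0 := by
  have h : v ⬝ᵥ (S *ᵥ v) = -(v ⬝ᵥ (S *ᵥ v)) := by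
    conv_lhs => rw [dotProduct_comm, ← vecMul_transpose, hS, vecMul_neg, neg_dotProduct,
      ← dotProduct_mulVec]
  linarith

lemma dotProduct_sub_mulVec_self_nonpos {S K : Matrix ι ι R} (hS : Sᵀ = -S)
    (hK : ∀ v, 0 ≤ v ⬝ᵥ (K *ᵥ v)) (g : ι → R) : g ⬝ᵥ ((S - K) *ᵥ g) ≤ 0 := by
  rw [sub_mulVec, dotProduct_sub, dotProduct_mulVec_self_eq_zero_of_transpose_eq_neg hS]
  linarith [hK g]

lemma dotProduct_smul_one_mulVec_self_nonneg [DecidableEq ι] {c : R} (hc : 0 ≤ c) (v : ι → R) :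
    0 ≤ v ⬝ᵥ ((c • 1 : Matrix ι ι R) *ᵥ v) := by
  rw [smul_mulVec, one_mulVec, dotProduct_smul, smul_eq_mul]
  exact mul_nonneg hc (Finset.sum_nonneg fun i _ => mul_self_nonneg (v i))

end OrderedRing

/-- The skew matrix `vecMulVec r g - vecMulVec g r` sends `g` to `(g ⬝ᵥ g) • r - (g ⬝ᵥ r) • g`;
the multiple of `g` is cancelled by a scalar `K`, which is positive semidefinite since
`g ⬝ᵥ r ≤ 0`. -/
lemma exists_skew_psd_sub_mulVec_eq [Field R] [LinearOrder R] [IsStrictOrderedRing R]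
    [DecidableEq ι] {g r : ι → R} (hg : g ≠ 0) (hr : g ⬝ᵥ r ≤ 0) :
    ∃ S K : Matrix ι ι R, Sᵀ = -S ∧ Kᵀ = K ∧ (∀ v, 0 ≤ v ⬝ᵥ (K *ᵥ v)) ∧ r = (S - K) *ᵥ g := by
  have hgg : 0 < g ⬝ᵥ g :=
    lt_of_le_of_ne (Finset.sum_nonneg fun i _ => mul_self_nonneg (g i))
      (Ne.symm (dotProduct_self_eq_zero.not.mpr hg))
  set t := (g ⬝ᵥ r) / (g ⬝ᵥ g) with ht
  have ht_nonpos : t ≤ 0 := div_nonpos_of_nonpos_of_nonneg hr hgg.le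
  refine ⟨(g ⬝ᵥ g)⁻¹ • (vecMulVec r g - vecMulVec g r), (-t) • 1, ?_, ?_,
    dotProduct_smul_one_mulVec_self_nonneg (neg_nonneg.mpr ht_nonpos), ?_⟩
  · rw [transpose_smul, transpose_sub, transpose_vecMulVec, transpose_vecMulVec, ← smul_neg,
      neg_sub]
  · rw [transpose_smul, transpose_one]
  · rw [sub_mulVec, smul_mulVec, sub_mulVec, vecMulVec_mulVec, vecMulVec_mulVec, smul_mulVec,
      one_mulVec, dotProduct_comm r g]
    ext i
    simp only [op_smul_eq_smul, Pi.sub_apply, Pi.smul_apply, smul_eq_mul, ht]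
    field_simp
    ring

theorem representable_set_eq_dissipative_cone (n : ℕ) (g : Fin n → ℝ) (hg : g ≠ 0) :
    {r : Fin n → ℝ | ∃ S K : Matrix (Fin n) (Fin n) ℝ,
        Sᵀ = -S ∧ Kᵀ = K ∧ (∀ v : Fin n → ℝ, 0 ≤ v ⬝ᵥ (K *ᵥ v)) ∧
        r = (S - K) *ᵥ g}
      = {r : Fin n → ℝ | g ⬝ᵥ r ≤ 0} := by
  ext r
  constructor
  · rintro ⟨S, K, hS, -, hK, rfl⟩
    exact dotProduct_sub_mulVec_self_nonpos hS hK g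
  · exact exists_skew_psd_sub_mulVec_eq hg
end
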